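/- Let (X_k) be a sequence of nonempty metric spaces and let Y be a nonempty metric space such that d̂(X_k, Y) → 0 as k → ∞. If every X_k is bounded (has finite diameter), then Y is bounded and diam(X_k) → diam(Y) as k → ∞. -/

import Mathlib

open ENNReal

/-- `f` is an `(A,B)`-quasi-isometric embedding. -/
def QIEmb {X Y : Type*} [MetricSpace X] [MetricSpace Y] (A B : ℝ) (f : X → Y) : Prop :=
  ∀ x x' : X, (1 / A) * dist x x' - B ≤ dist (f x) (f x') ∧
    dist (f x) (f x') ≤ A * dist x x' + B

/-- `X` and `Y` are `(A,B,C)`-quasi-isometric. -/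
def QuasiIsometric (X Y : Type*) [MetricSpace X] [MetricSpace Y] (A B C : ℝ) : Prop :=
  ∃ (f : X → Y) (g : Y → X), QIEmb A B f ∧ QIEmb A B g ∧
    (∀ x : X, dist (g (f x)) x ≤ C) ∧ (∀ y : Y, dist (f (g y)) y ≤ C)

/-- The quasi-isometric distance `d̂`. -/
noncomputable def qiDist (X Y : Type*) [MetricSpace X] [MetricSpace Y] : ℝ≥0∞ :=
  sInf {e : ℝ≥0∞ | ∃ r : ℝ, 0 < r ∧ e = ENNReal.ofReal r ∧ QuasiIsometric X Y (1 + r) r r}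

/-!
A `(1 + r, r, r)`-quasi-isometry distorts distances by a factor `1 + r` up to an additive error
of order `r`, so it carries a bounded space to a bounded space and changes its diameter by at
most `O(r)`. Once one `X k` is close to `Y`, `Y` is bounded, and the diameters of the later
`X k` then differ from that of `Y` by `O(d̂(X k, Y))`.
-/

open Filter Set Metric Bornology

namespace QuasiIsometric

variable {X Y : Type*} [MetricSpace X] [MetricSpace Y] {A B C : ℝ}

lemma symm (h : QuasiIsometric X Y A B C) : QuasiIsometric Y X A B C := by
  obtain ⟨f, g, hf, hg, hgf, hfg⟩ := h
  exact ⟨g, f, hg, hf, hfg, hgf⟩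

lemma dist_le_of_isBounded (h : QuasiIsometric X Y A B C) (hA : 0 ≤ A)
    (hX : IsBounded (univ : Set X)) (y y' : Y) :
    dist y y' ≤ A * diam (univ : Set X) + B + 2 * C := by
  obtain ⟨f, g, hf, -, -, hfg⟩ := h
  calc dist y y' ≤ dist y (f (g y)) + dist (f (g y)) (f (g y')) + dist (f (g y')) y' :=
        dist_triangle4 _ _ _ _
    _ ≤ C + (A * diam (univ : Set X) + B) + C := by
        gcongr
        · rw [dist_comm]
          exact hfg y
        · exact (hf _ _).2.trans (by gcongr; exact dist_le_diam_of_mem hX trivial trivial)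
        · exact hfg y'
    _ = A * diam (univ : Set X) + B + 2 * C := by ring

lemma isBounded_univ (h : QuasiIsometric X Y A B C) (hA : 0 ≤ A)
    (hX : IsBounded (univ : Set X)) : IsBounded (univ : Set Y) :=
  isBounded_iff.2 ⟨_, fun y _ y' _ => h.dist_le_of_isBounded hA hX y y'⟩

lemma diam_univ_le (h : QuasiIsometric X Y A B C) (hA : 0 ≤ A) (hB : 0 ≤ B) (hC : 0 ≤ C)
    (hX : IsBounded (univ : Set X)) :
    diam (univ : Set Y) ≤ A * diam (univ : Set X) + B + 2 * C :=
  diam_le_of_forall_dist_le (by have := diam_nonneg (s := (univ : Set X)); positivity)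
    fun y _ y' _ => h.dist_le_of_isBounded hA hX y y'

lemma abs_diam_sub_diam_le {r : ℝ} (h : QuasiIsometric X Y (1 + r) r r) (hr₀ : 0 ≤ r)
    (hr₁ : r ≤ 1) (hY : IsBounded (univ : Set Y)) :
    |diam (univ : Set X) - diam (univ : Set Y)| ≤ r * (2 * diam (univ : Set Y) + 6) := by
  have hX : IsBounded (univ : Set X) := h.symm.isBounded_univ (by linarith) hY
  have hXY := h.symm.diam_univ_le (by linarith) hr₀ hr₀ hY
  have hYX := h.diam_univ_le (by linarith) hr₀ hr₀ hX
  have hDX : 0 ≤ diam (univ : Set X) := diam_nonneg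
  have hDY : 0 ≤ diam (univ : Set Y) := diam_nonneg
  have hr₂ : r * r ≤ r := mul_le_of_le_one_right hr₀ hr₁
  rw [abs_le]
  constructor <;> nlinarith [mul_le_mul_of_nonneg_left hXY hr₀, mul_le_mul_of_nonneg_right hr₂ hDY]

end QuasiIsometric

lemma exists_quasiIsometric_of_qiDist_lt {X Y : Type*} [MetricSpace X] [MetricSpace Y] {δ : ℝ}
    (h : qiDist X Y < ENNReal.ofReal δ) : ∃ r, 0 < r ∧ r < δ ∧ QuasiIsometric X Y (1 + r) r r := by
  obtain ⟨_, ⟨r, hr, rfl, hQI⟩, hlt⟩ := sInf_lt_iff.mp h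
  exact ⟨r, hr, (ENNReal.ofReal_lt_ofReal_iff'.mp hlt).1, hQI⟩

lemma eventually_quasiIsometric_of_tendsto_qiDist {ι : Type*} {l : Filter ι} {X : ι → Type*}
    [∀ k, MetricSpace (X k)] {Y : Type*} [MetricSpace Y]
    (hconv : Tendsto (fun k => qiDist (X k) Y) l (nhds 0)) {δ : ℝ} (hδ : 0 < δ) :
    ∀ᶠ k in l, ∃ r, 0 < r ∧ r < δ ∧ QuasiIsometric (X k) Y (1 + r) r r :=
  (hconv.eventually_lt_const (ENNReal.ofReal_pos.2 hδ)).mono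
    fun _ hk => exists_quasiIsometric_of_qiDist_lt hk

theorem bounded_of_qi_limit_and_diam_tendsto_general
    (X : ℕ → Type*) [∀ k, MetricSpace (X k)]
    (Y : Type*) [MetricSpace Y]
    (hconv : Tendsto (fun k => qiDist (X k) Y) atTop (nhds 0))
    (hbdd : ∀ k, Bornology.IsBounded (Set.univ : Set (X k))) :
    Bornology.IsBounded (Set.univ : Set Y) ∧
    Tendsto (fun k => Metric.diam (Set.univ : Set (X k))) atTop
      (nhds (Metric.diam (Set.univ : Set Y))) := by
  have hY : IsBounded (univ : Set Y) := by
    obtain ⟨k, r, hr, -, hQI⟩ := (eventually_quasiIsometric_of_tendsto_qiDist hconv one_pos).exists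
    exact hQI.isBounded_univ (by linarith) (hbdd k)
  refine ⟨hY, Metric.tendsto_nhds.2 fun ε hε => ?_⟩
  set M := 2 * diam (univ : Set Y) + 6
  have hM : 0 < M := by have := diam_nonneg (s := (univ : Set Y)); positivity
  filter_upwards [eventually_quasiIsometric_of_tendsto_qiDist hconv
    (lt_min one_pos (div_pos hε hM))] with k ⟨r, hr, hrδ, hQI⟩
  rw [Real.dist_eq]
  calc |diam (univ : Set (X k)) - diam (univ : Set Y)| ≤ r * M :=
        hQI.abs_diam_sub_diam_le hr.le (hrδ.le.trans (min_le_left _ _)) hY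
    _ < ε / M * M := by gcongr; exact hrδ.trans_le (min_le_right _ _)
    _ = ε := div_mul_cancel₀ _ hM.ne'

/-- Boundedness is inherited by quasi-isometric limits, and diameters converge. -/
theorem bounded_of_qi_limit_and_diam_tendsto
    (X : ℕ → Type*) [∀ k, MetricSpace (X k)] [∀ k, Nonempty (X k)]
    (Y : Type*) [MetricSpace Y] [Nonempty Y]
    (hconv : Tendsto (fun k => qiDist (X k) Y) atTop (nhds 0))
    (hbdd : ∀ k, Bornology.IsBounded (Set.univ : Set (X k))) :
    Bornology.IsBounded (Set.univ : Set Y) ∧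
    Tendsto (fun k => Metric.diam (Set.univ : Set (X k))) atTop
      (nhds (Metric.diam (Set.univ : Set Y))) :=
  bounded_of_qi_limit_and_diam_tendsto_general X Y hconv hbdd
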